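/- The function σ(t) := erf(t) + (2/√π) e^{-t²} (−t + (118/15)t³ − (68/15)t⁵ + (8/15)t⁷) satisfies ∫₀^∞ (1 − σ(t)) t^{2(j−1)} dt = 0 for j = 1, 2, 3. -/

import Mathlib

open MeasureTheory Real

/-- The error function `erf(t) = (2/√π) ∫₀^t e^{-s²} ds`. -/
noncomputable def erf (t : ℝ) : ℝ := (2 / Real.sqrt Real.pi) * ∫ s in (0:ℝ)..t, Real.exp (-s ^ 2)

/-- Seventh-order regularizing function for the double-layer operator. -/
noncomputable def σK (t : ℝ) : ℝ :=
  erf t + (2 / Real.sqrt Real.pi) * Real.exp (-t ^ 2) *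
    (-t + (118 / 15) * t ^ 3 - (68 / 15) * t ^ 5 + (8 / 15) * t ^ 7)

/-! Since `1 - erf` decays like a Gaussian, integrating by parts against `t ^ (2k)` gives
`∫₀^∞ (1 - erf t) t^(2k) dt = (2/√π)/(2k+1) ∫₀^∞ t^(2k+1) e^(-t²) dt = k!/((2k+1)√π)`.
The rest of `1 - σK` is `e^(-t²)` times an odd polynomial, whose moments are the Gaussian
moments `∫₀^∞ t^(2m+1) e^(-t²) dt = m!/2`. So the `k`-th even moment of `1 - σK` is an explicit
combination of factorials, which vanishes for `k = 0, 1, 2`. -/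

open Set Filter Topology Nat

lemma integrable_exp_neg_sq : Integrable fun s : ℝ => exp (-s ^ 2) := by
  simpa using integrable_exp_neg_mul_sq (b := 1) one_pos

lemma integrableOn_pow_mul_exp_neg_sq (n : ℕ) :
    IntegrableOn (fun t : ℝ => t ^ n * exp (-t ^ 2)) (Ioi 0) := by
  simpa [Real.rpow_natCast] using integrableOn_rpow_mul_exp_neg_mul_sq (b := 1) one_pos
    (s := n) (by linarith [n.cast_nonneg (α := ℝ)])

lemma integral_pow_two_mul_add_one_mul_exp_neg_sq (m : ℕ) :
    ∫ t in Ioi (0 : ℝ), t ^ (2 * m + 1) * exp (-t ^ 2) = m ! / 2 := by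
  have h := integral_rpow_mul_exp_neg_mul_rpow (p := 2) (q := 2 * m + 1) (b := 1) two_pos
    (by linarith [m.cast_nonneg (α := ℝ)]) one_pos
  have hq : ((2 * m + 1 : ℝ) + 1) / 2 = m + 1 := by ring
  simp only [one_rpow, one_mul, neg_mul, hq, Gamma_nat_eq_factorial] at h
  rw [div_eq_inv_mul, ← one_div, ← h]
  refine setIntegral_congr_fun measurableSet_Ioi fun t _ => ?_
  norm_cast

lemma tendsto_pow_mul_exp_neg_sq_atTop (n : ℕ) :
    Tendsto (fun t : ℝ => t ^ n * exp (-t ^ 2)) atTop (𝓝 0) := by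
  have h := (rpow_mul_exp_neg_mul_sq_isLittleO_exp_neg (b := 1) one_pos n).tendsto_zero_of_tendsto
    (tendsto_exp_atBot.comp ((tendsto_const_mul_atBot_of_neg (by norm_num)).2 tendsto_id))
  exact h.congr fun t => by simp [Real.rpow_natCast]

lemma hasDerivAt_erf (t : ℝ) : HasDerivAt erf (2 / √π * exp (-t ^ 2)) t := by
  have hc : Continuous fun s : ℝ => exp (-s ^ 2) := by fun_prop
  exact (intervalIntegral.integral_hasDerivAt_right (hc.intervalIntegrable _ _)
    hc.aestronglyMeasurable.stronglyMeasurableAtFilter hc.continuousAt).const_mul _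

lemma continuous_erf : Continuous erf :=
  continuous_iff_continuousAt.2 fun t => (hasDerivAt_erf t).continuousAt

lemma one_sub_erf_eq_integral_Ioi (t : ℝ) :
    1 - erf t = 2 / √π * ∫ s in Ioi t, exp (-s ^ 2) := by
  have hsplit := intervalIntegral.integral_interval_add_Ioi (a := 0) (b := t)
    integrable_exp_neg_sq.integrableOn integrable_exp_neg_sq.integrableOn
  have htotal : ∫ s in Ioi (0 : ℝ), exp (-s ^ 2) = √π / 2 := by
    simpa using integral_gaussian_Ioi 1
  have hπ : √π ≠ 0 := (sqrt_pos.2 pi_pos).ne'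
  rw [erf, eq_sub_of_add_eq (hsplit.trans htotal)]
  field_simp
  ring

lemma one_sub_erf_nonneg (t : ℝ) : 0 ≤ 1 - erf t := by
  rw [one_sub_erf_eq_integral_Ioi]
  exact mul_nonneg (by positivity) (setIntegral_nonneg measurableSet_Ioi fun _ _ => (exp_pos _).le)

/-- For `s ≥ t ≥ 0`, `s² ≥ t² + (s - t)²`. -/
lemma one_sub_erf_le {t : ℝ} (ht : 0 ≤ t) : 1 - erf t ≤ 2 * exp (-t ^ 2) := by
  have hshift : Integrable fun s : ℝ => exp (-(s - t) ^ 2) :=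
    integrable_exp_neg_sq.comp_sub_right t
  have hmono : ∫ s in Ioi t, exp (-s ^ 2) ≤ ∫ s in Ioi t, exp (-t ^ 2) * exp (-(s - t) ^ 2) := by
    refine setIntegral_mono_on integrable_exp_neg_sq.integrableOn
      (hshift.const_mul _).integrableOn measurableSet_Ioi fun s hs => ?_
    rw [← exp_add, exp_le_exp]
    nlinarith [mem_Ioi.1 hs]
  have htail : ∫ s in Ioi t, exp (-(s - t) ^ 2) ≤ √π := by
    calc ∫ s in Ioi t, exp (-(s - t) ^ 2)
        ≤ ∫ s, exp (-(s - t) ^ 2) :=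
          setIntegral_le_integral hshift (Eventually.of_forall fun _ => (exp_pos _).le)
      _ = √π := by
          rw [integral_sub_right_eq_self (fun s => exp (-s ^ 2)) t]
          simpa using integral_gaussian 1
  rw [integral_const_mul] at hmono
  rw [one_sub_erf_eq_integral_Ioi]
  calc 2 / √π * ∫ s in Ioi t, exp (-s ^ 2)
      ≤ 2 / √π * (exp (-t ^ 2) * √π) := by gcongr; exact hmono.trans (by gcongr)
    _ = 2 * exp (-t ^ 2) := by field_simp

lemma one_sub_erf_mul_pow_le {t : ℝ} (ht : 0 ≤ t) (n : ℕ) :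
    (1 - erf t) * t ^ n ≤ 2 * (t ^ n * exp (-t ^ 2)) := by
  nlinarith [one_sub_erf_le ht, pow_nonneg ht n]

lemma integrableOn_one_sub_erf_mul_pow (n : ℕ) :
    IntegrableOn (fun t => (1 - erf t) * t ^ n) (Ioi 0) := by
  refine ((integrableOn_pow_mul_exp_neg_sq n).const_mul 2).mono'
    ((continuous_const.sub continuous_erf).mul (continuous_pow n)).aestronglyMeasurable ?_
  filter_upwards [ae_restrict_mem measurableSet_Ioi] with t ht
  rw [norm_of_nonneg (mul_nonneg (one_sub_erf_nonneg t) (pow_nonneg (ht.le) n))]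
  exact one_sub_erf_mul_pow_le (ht.le) n

lemma tendsto_one_sub_erf_mul_pow_atTop (n : ℕ) :
    Tendsto (fun t => (1 - erf t) * t ^ n) atTop (𝓝 0) := by
  have hbound := (tendsto_pow_mul_exp_neg_sq_atTop n).const_mul 2
  rw [mul_zero] at hbound
  refine tendsto_of_tendsto_of_tendsto_of_le_of_le' tendsto_const_nhds hbound ?_ ?_
  all_goals filter_upwards [eventually_ge_atTop 0] with t ht
  · exact mul_nonneg (one_sub_erf_nonneg t) (pow_nonneg ht n)
  · exact one_sub_erf_mul_pow_le ht n

/-- Integration by parts against `t ^ n = d/dt (t ^ (n + 1) / (n + 1))`. -/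
lemma integral_one_sub_erf_mul_pow (n : ℕ) :
    ∫ t in Ioi (0 : ℝ), (1 - erf t) * t ^ n =
      2 / √π / (n + 1) * ∫ t in Ioi (0 : ℝ), t ^ (n + 1) * exp (-t ^ 2) := by
  set F : ℝ → ℝ := fun t => (1 - erf t) * t ^ (n + 1) / (n + 1)
  have hF : ∀ t, HasDerivAt F ((1 - erf t) * t ^ n - 2 / √π / (n + 1) *
      (t ^ (n + 1) * exp (-t ^ 2))) t := by
    intro t
    refine ((((hasDerivAt_erf t).const_sub 1).mul (hasDerivAt_pow (n + 1) t)).div_const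
      ((n : ℝ) + 1)).congr_deriv ?_
    rw [Nat.add_sub_cancel]
    push_cast
    field_simp
    ring
  have hFTC := integral_Ioi_of_hasDerivAt_of_tendsto' (fun t _ => hF t)
    ((integrableOn_one_sub_erf_mul_pow n).sub
      ((integrableOn_pow_mul_exp_neg_sq (n + 1)).const_mul _))
    (by simpa [F] using (tendsto_one_sub_erf_mul_pow_atTop (n + 1)).div_const ((n : ℝ) + 1))
  rw [integral_sub (integrableOn_one_sub_erf_mul_pow n)
    ((integrableOn_pow_mul_exp_neg_sq (n + 1)).const_mul _), integral_const_mul] at hFTC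
  simpa [F, sub_eq_zero] using hFTC

lemma integral_one_sub_erf_mul_pow_two_mul (k : ℕ) :
    ∫ t in Ioi (0 : ℝ), (1 - erf t) * t ^ (2 * k) = k ! / ((2 * k + 1) * √π) := by
  rw [integral_one_sub_erf_mul_pow, integral_pow_two_mul_add_one_mul_exp_neg_sq]
  push_cast
  field_simp

lemma integral_one_sub_σK_mul_pow_two_mul (k : ℕ) :
    ∫ t in Ioi (0 : ℝ), (1 - σK t) * t ^ (2 * k) =
      (k ! / (2 * k + 1) - (-k ! + 118 / 15 * (k + 1)! - 68 / 15 * (k + 2)! + 8 / 15 * (k + 3)!))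
        / √π := by
  set g : ℕ → ℝ → ℝ := fun m t => t ^ (2 * m + 1) * exp (-t ^ 2)
  have hg : ∀ m, IntegrableOn (g m) (Ioi 0) := fun m => integrableOn_pow_mul_exp_neg_sq _
  have hsplit : ∀ t, (1 - σK t) * t ^ (2 * k) = (1 - erf t) * t ^ (2 * k) - 2 / √π *
      (-g k t + 118 / 15 * g (k + 1) t - 68 / 15 * g (k + 2) t + 8 / 15 * g (k + 3) t) := by
    intro t
    simp only [σK, g]
    ring
  have h₁ : IntegrableOn (fun t => -g k t + 118 / 15 * g (k + 1) t) (Ioi 0) :=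
    (hg k).neg.add ((hg (k + 1)).const_mul _)
  have h₂ : IntegrableOn (fun t => -g k t + 118 / 15 * g (k + 1) t - 68 / 15 * g (k + 2) t)
      (Ioi 0) := h₁.sub ((hg (k + 2)).const_mul _)
  have h₃ : IntegrableOn (fun t => -g k t + 118 / 15 * g (k + 1) t - 68 / 15 * g (k + 2) t +
      8 / 15 * g (k + 3) t) (Ioi 0) := h₂.add ((hg (k + 3)).const_mul _)
  simp_rw [hsplit]
  rw [integral_sub (integrableOn_one_sub_erf_mul_pow _) (h₃.const_mul _), integral_const_mul,
    integral_add h₂ ((hg _).const_mul _), integral_sub h₁ ((hg _).const_mul _),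
    integral_add (f := fun t => -g k t) (hg k).neg ((hg _).const_mul _), integral_neg,
    integral_const_mul, integral_const_mul, integral_const_mul]
  simp only [g, integral_pow_two_mul_add_one_mul_exp_neg_sq, integral_one_sub_erf_mul_pow_two_mul]
  field_simp

/-- The moment conditions `∫₀^∞ (1 − σ(t)) t^{2(j−1)} dt = 0` for `j = 1, 2, 3`. -/
theorem sigmaK_moments :
    ∀ j : ℕ, 1 ≤ j → j ≤ 3 → ∫ t in Set.Ioi (0:ℝ), (1 - σK t) * t ^ (2 * (j - 1)) = 0 := by
  intro j hj1 hj3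
  obtain ⟨k, rfl⟩ := Nat.exists_eq_add_of_le' hj1
  have hk : k ≤ 2 := by omega
  rw [Nat.add_sub_cancel, integral_one_sub_σK_mul_pow_two_mul]
  interval_cases k <;> norm_num [Nat.factorial]
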